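/- Let n ∈ ℕ, let ξ ∈ Δ_n, let C ∈ 𝒞_n, and define P(λ) := ∫_{ℝ^n} log(Σ_{i=1}^n ξ_i e^{λ x_i}) dN(0,C)(x) for λ ∈ ℝ. Then P is differentiable on ℝ and P′(λ) = λ·(1 − ∫_{ℝ^n} Σ_{i,j=1}^n w_i(λ,x) w_j(λ,x) c_{ij} dN(0,C)(x)). -/

import Mathlib

open MeasureTheory ProbabilityTheory

open scoped Classical in
/-- Centered Gaussian measure on `ℝⁿ` with covariance matrix `C`: the image of the standard
Gaussian product measure under multiplication by the positive semidefinite square root of `C`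
(junk value `0` if `C` is not positive semidefinite). -/
noncomputable def gaussianPi {n : ℕ} (C : Matrix (Fin n) (Fin n) ℝ) : Measure (Fin n → ℝ) :=
  if hC : C.PosSemidef then
    (Measure.pi fun _ : Fin n => gaussianReal 0 1).map (fun z => (hC.1.eigenvectorUnitary.1 * Matrix.diagonal (Real.sqrt ∘ hC.1.eigenvalues) *
      (star hC.1.eigenvectorUnitary : Matrix (Fin n) (Fin n) ℝ)).mulVec z)
  else 0

/-- The tilted Gibbs weights `w_i(λ,x) = ξ_i e^{λ x_i} / ∑_j ξ_j e^{λ x_j}`. -/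
noncomputable def gibbsW {n : ℕ} (ξ : Fin n → ℝ) (lam : ℝ) (x : Fin n → ℝ) (i : Fin n) : ℝ :=
  ξ i * Real.exp (lam * x i) / ∑ j, ξ j * Real.exp (lam * x j)

open Real

/-!
Differentiating under the integral sign (the `λ`-derivative `∑ᵢ wᵢ xᵢ` of the integrand is
bounded by `‖x‖`) gives `P'(λ) = E[∑ᵢ wᵢ xᵢ]`. Gaussian integration by parts,
`E[xᵢ f(x)] = ∑ⱼ cⱼᵢ E[∂ⱼ f(x)]`, applied to `f = wᵢ`, whose partial derivatives are
`∂ⱼ wᵢ = λ wᵢ (δᵢⱼ - wⱼ)`, turns this into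
`λ (∑ᵢ cᵢᵢ E[wᵢ] - E[∑ᵢⱼ wᵢ wⱼ cᵢⱼ])`; conclude with `cᵢᵢ = 1` and `∑ᵢ wᵢ = 1`.
Integration by parts for `N(0, C)` reduces through `x = √C z` to the standard Gaussian, where it
is Fubini plus the one-dimensional identity `E[z g(z)] = E[g'(z)]`, i.e. `φ' = -z φ` for the
density `φ`.
-/

local notation "γ" => Measure.pi fun _ => gaussianReal 0 1

lemma gaussianPDFReal_zero_one :
    gaussianPDFReal 0 1 = fun t => (√(2 * π))⁻¹ * rexp (-t ^ 2 / 2) := by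
  ext t; simp [gaussianPDFReal]

lemma hasDerivAt_gaussianPDFReal_zero_one (t : ℝ) :
    HasDerivAt (gaussianPDFReal 0 1) (-t * gaussianPDFReal 0 1 t) t := by
  rw [gaussianPDFReal_zero_one]
  have h : HasDerivAt (fun s : ℝ => -s ^ 2 / 2) (-t) t :=
    ((hasDerivAt_pow 2 t).fun_neg.div_const 2).congr_deriv (by push_cast; ring)
  exact (h.exp.const_mul _).congr_deriv (by ring)

lemma integrable_mul_gaussianPDFReal_zero_one :
    Integrable fun t : ℝ => t * gaussianPDFReal 0 1 t := by
  convert (integrable_mul_exp_neg_mul_sq (b := 1 / 2) (by norm_num)).const_mul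
    (√(2 * π))⁻¹ using 2 with t
  rw [gaussianPDFReal_zero_one]
  ring_nf

theorem integral_mul_eq_integral_deriv_gaussianReal {g g' : ℝ → ℝ} {M M' : ℝ}
    (hg : ∀ t, HasDerivAt g (g' t) t) (hg' : Continuous g')
    (hgM : ∀ t, |g t| ≤ M) (hg'M : ∀ t, |g' t| ≤ M') :
    ∫ t, t * g t ∂gaussianReal 0 1 = ∫ t, g' t ∂gaussianReal 0 1 := by
  have hgc : Continuous g := continuous_iff_continuousAt.2 fun t => (hg t).continuousAt
  have hφ := integrable_gaussianPDFReal 0 1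
  have hgφ' : Integrable (g * fun t => -t * gaussianPDFReal 0 1 t) := by
    convert (integrable_mul_gaussianPDFReal_zero_one.bdd_mul hgc.aestronglyMeasurable
      (ae_of_all _ hgM)).neg using 1
    ext t; simp
  have ibp := integral_mul_deriv_eq_deriv_mul_of_integrable (fun t _ => hg t)
    (fun t _ => hasDerivAt_gaussianPDFReal_zero_one t) hgφ'
    (hφ.bdd_mul hg'.aestronglyMeasurable (ae_of_all _ hg'M))
    (hφ.bdd_mul hgc.aestronglyMeasurable (ae_of_all _ hgM))
  have hlhs : ∫ t, g t * (-t * gaussianPDFReal 0 1 t) =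
      -∫ t, gaussianPDFReal 0 1 t * (t * g t) := by
    rw [← integral_neg]; congr with t; ring
  rw [hlhs, neg_inj] at ibp
  simp only [integral_gaussianReal_eq_integral_smul one_ne_zero, smul_eq_mul]
  simpa only [mul_comm] using ibp

theorem integral_pi_eq_integral_integral_insertNth {m : ℕ} {α : Fin (m + 1) → Type*}
    [∀ i, MeasurableSpace (α i)] {μ : ∀ i, Measure (α i)} [∀ i, SigmaFinite (μ i)]
    {E : Type*} [NormedAddCommGroup E] [NormedSpace ℝ E] {F : (∀ i, α i) → E}
    (hF : Integrable F (Measure.pi μ)) (k : Fin (m + 1)) :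
    ∫ x, F x ∂Measure.pi μ =
      ∫ y, ∫ t, F (k.insertNth t y) ∂μ k ∂Measure.pi fun j => μ (k.succAbove j) := by
  have hmp := (measurePreserving_piFinSuccAbove μ k).symm
  rw [← hmp.integral_comp', integral_prod_symm]
  · rfl
  · exact (hmp.integrable_comp_emb (MeasurableEquiv.measurableEmbedding _)).2 hF

lemma integrable_eval_pi_gaussianReal {n : ℕ} (k : Fin n) :
    Integrable (fun z : Fin n → ℝ => z k) γ :=
  integrable_eval ((memLp_id_gaussianReal 1).integrable le_rfl)

lemma integrable_eval_mul_pi_gaussianReal {n : ℕ} {G : (Fin n → ℝ) → ℝ} {M : ℝ}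
    (hG : Continuous G) (hGM : ∀ z, |G z| ≤ M) (k : Fin n) :
    Integrable (fun z => z k * G z) γ :=
  (integrable_eval_pi_gaussianReal k).mul_bdd hG.aestronglyMeasurable (ae_of_all _ hGM)

lemma integrable_clm_apply_of_norm_le {X F : Type*} [MeasurableSpace X] [TopologicalSpace X]
    [OpensMeasurableSpace X] [NormedAddCommGroup F] [NormedSpace ℝ F]
    {μ : Measure X} [IsFiniteMeasure μ]
    {G' : X → F →L[ℝ] ℝ} {M' : ℝ} (hG' : Continuous G') (hG'M : ∀ z, ‖G' z‖ ≤ M') (v : F) :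
    Integrable (fun z => G' z v) μ :=
  .of_bound (hG'.clm_apply continuous_const).aestronglyMeasurable (M' * ‖v‖)
    (ae_of_all _ fun z => ((G' z).le_opNorm v).trans
      (mul_le_mul_of_nonneg_right (hG'M z) (norm_nonneg v)))

theorem integral_eval_mul_pi_gaussianReal {n : ℕ} {G : (Fin n → ℝ) → ℝ}
    {G' : (Fin n → ℝ) → (Fin n → ℝ) →L[ℝ] ℝ} {M M' : ℝ}
    (hG : ∀ z, HasFDerivAt G (G' z) z) (hG' : Continuous G')
    (hGM : ∀ z, |G z| ≤ M) (hG'M : ∀ z, ‖G' z‖ ≤ M') (k : Fin n) :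
    ∫ z, z k * G z ∂γ = ∫ z, G' z (Pi.single k 1) ∂γ := by
  obtain ⟨m, rfl⟩ := Nat.exists_eq_add_one_of_ne_zero k.pos.ne'
  have hGc : Continuous G := continuous_iff_continuousAt.2 fun z => (hG z).continuousAt
  have hG'kc : Continuous fun z => G' z (Pi.single k 1) := hG'.clm_apply continuous_const
  have hG'kM (z) : |G' z (Pi.single k 1)| ≤ M' * ‖(Pi.single k 1 : Fin (m + 1) → ℝ)‖ :=
    ((G' z).le_opNorm _).trans (mul_le_mul_of_nonneg_right (hG'M z) (norm_nonneg _))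
  have hline (y : Fin m → ℝ) (t : ℝ) :
      HasDerivAt (fun s => G (k.insertNth s y)) (G' (k.insertNth t y) (Pi.single k 1)) t := by
    have hupd : (fun s => (k.insertNth s y : Fin (m + 1) → ℝ)) =
        Function.update (k.insertNth 0 y : Fin (m + 1) → ℝ) k :=
      funext fun s => by rw [Fin.update_insertNth]
    exact (hG _).comp_hasDerivAt t (hupd ▸ hasDerivAt_update _ k t)
  rw [integral_pi_eq_integral_integral_insertNth (integrable_eval_mul_pi_gaussianReal hGc hGM k) k,
    integral_pi_eq_integral_integral_insertNth (integrable_clm_apply_of_norm_le hG' hG'M _) k]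
  refine integral_congr_ae (ae_of_all _ fun y => ?_)
  simpa using integral_mul_eq_integral_deriv_gaussianReal (hline y)
    (hG'kc.comp (continuous_id.finInsertNth (A := fun _ => ℝ) k continuous_const))
    (fun t => hGM _) (fun t => hG'kM _)

theorem integral_sum_mul_pi_gaussianReal {n : ℕ} {G : (Fin n → ℝ) → ℝ}
    {G' : (Fin n → ℝ) → (Fin n → ℝ) →L[ℝ] ℝ} {M M' : ℝ}
    (hG : ∀ z, HasFDerivAt G (G' z) z) (hG' : Continuous G')
    (hGM : ∀ z, |G z| ≤ M) (hG'M : ∀ z, ‖G' z‖ ≤ M') (v : Fin n → ℝ) :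
    ∫ z, (∑ k, v k * z k) * G z ∂γ = ∫ z, G' z v ∂γ := by
  have hGc : Continuous G := continuous_iff_continuousAt.2 fun z => (hG z).continuousAt
  have hv : v = ∑ k, v k • Pi.single k 1 := by
    ext j; simp [Pi.single_apply]
  conv_rhs => rw [hv]
  simp only [map_sum, map_smul, smul_eq_mul, Finset.sum_mul, mul_assoc]
  rw [integral_finsetSum _ fun k _ => (integrable_eval_mul_pi_gaussianReal hGc hGM k).const_mul _,
    integral_finsetSum _ fun k _ => (integrable_clm_apply_of_norm_le hG' hG'M _).const_mul _]
  simp only [integral_const_mul, integral_eval_mul_pi_gaussianReal hG hG' hGM hG'M]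

theorem integral_eval_mul_map_mulVec_pi_gaussianReal {n : ℕ} (A : Matrix (Fin n) (Fin n) ℝ)
    {f : (Fin n → ℝ) → ℝ} {f' : (Fin n → ℝ) → (Fin n → ℝ) →L[ℝ] ℝ} {M M' : ℝ}
    (hf : ∀ x, HasFDerivAt f (f' x) x) (hf' : Continuous f')
    (hfM : ∀ x, |f x| ≤ M) (hf'M : ∀ x, ‖f' x‖ ≤ M') (i : Fin n) :
    ∫ x, x i * f x ∂Measure.map (fun z => A.mulVec z) γ =
      ∫ x, f' x (fun j => (A * A.transpose) j i) ∂Measure.map (fun z => A.mulVec z) γ := by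
  set L : (Fin n → ℝ) →L[ℝ] (Fin n → ℝ) := LinearMap.toContinuousLinearMap (Matrix.toLin' A)
  have hL (z) : L z = A.mulVec z := Matrix.toLin'_apply A z
  have hfc : Continuous f := continuous_iff_continuousAt.2 fun x => (hf x).continuousAt
  have hLm : AEMeasurable (fun z => A.mulVec z) γ := by fun_prop
  have hfi : Continuous fun x : Fin n → ℝ => x i * f x := by fun_prop
  rw [integral_map hLm hfi.aestronglyMeasurable,
    integral_map hLm (hf'.clm_apply continuous_const).aestronglyMeasurable]
  have hcol : (fun j => (A * A.transpose) j i) = A.mulVec fun k => A i k := by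
    ext j; simp [Matrix.mul_apply, Matrix.mulVec, dotProduct, mul_comm]
  have hibp := integral_sum_mul_pi_gaussianReal (G := fun z => f (L z))
    (G' := fun z => (f' (L z)).comp L) (fun z => (hf (L z)).comp z L.hasFDerivAt)
    ((hf'.comp L.continuous).clm_comp continuous_const) (fun z => hfM _)
    (fun z => ((f' (L z)).opNorm_comp_le L).trans
      (mul_le_mul_of_nonneg_right (hf'M _) (norm_nonneg _))) (fun k => A i k)
  simp only [hL, ContinuousLinearMap.comp_apply] at hibp
  rw [hcol, ← hibp]
  simp [Matrix.mulVec, dotProduct]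

section Gibbs

variable {n : ℕ} {ξ : Fin n → ℝ}

lemma sum_mul_exp_le_exp (hξ : ξ ∈ stdSimplex ℝ (Fin n)) {l c : ℝ} {x : Fin n → ℝ}
    (hx : ∀ i, l * x i ≤ c) : ∑ i, ξ i * exp (l * x i) ≤ exp c :=
  calc ∑ i, ξ i * exp (l * x i) ≤ ∑ i, ξ i * exp c :=
        Finset.sum_le_sum fun i _ => mul_le_mul_of_nonneg_left (exp_le_exp.2 (hx i)) (hξ.1 i)
    _ = exp c := by rw [← Finset.sum_mul, hξ.2, one_mul]

lemma exp_le_sum_mul_exp (hξ : ξ ∈ stdSimplex ℝ (Fin n)) {l c : ℝ} {x : Fin n → ℝ}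
    (hx : ∀ i, c ≤ l * x i) : exp c ≤ ∑ i, ξ i * exp (l * x i) :=
  calc exp c = ∑ i, ξ i * exp c := by rw [← Finset.sum_mul, hξ.2, one_mul]
    _ ≤ ∑ i, ξ i * exp (l * x i) :=
        Finset.sum_le_sum fun i _ => mul_le_mul_of_nonneg_left (exp_le_exp.2 (hx i)) (hξ.1 i)

lemma abs_mul_apply_le (l : ℝ) (x : Fin n → ℝ) (i : Fin n) : |l * x i| ≤ |l| * ‖x‖ := by
  rw [abs_mul]
  exact mul_le_mul_of_nonneg_left (norm_le_pi_norm x i) (abs_nonneg l)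

lemma exp_neg_le_sum_mul_exp (hξ : ξ ∈ stdSimplex ℝ (Fin n)) (l : ℝ) (x : Fin n → ℝ) :
    exp (-(|l| * ‖x‖)) ≤ ∑ i, ξ i * exp (l * x i) :=
  exp_le_sum_mul_exp hξ fun i => (neg_le_neg (abs_mul_apply_le l x i)).trans (neg_abs_le _)

lemma sum_mul_exp_pos (hξ : ξ ∈ stdSimplex ℝ (Fin n)) (l : ℝ) (x : Fin n → ℝ) :
    0 < ∑ i, ξ i * exp (l * x i) :=
  (exp_pos _).trans_le (exp_neg_le_sum_mul_exp hξ l x)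

lemma abs_log_sum_mul_exp_le (hξ : ξ ∈ stdSimplex ℝ (Fin n)) (l : ℝ) (x : Fin n → ℝ) :
    |log (∑ i, ξ i * exp (l * x i))| ≤ |l| * ‖x‖ := by
  have hZ := sum_mul_exp_pos hξ l x
  refine abs_le.2 ⟨(le_log_iff_exp_le hZ).2 (exp_neg_le_sum_mul_exp hξ l x),
    (log_le_iff_le_exp hZ).2 ?_⟩
  exact sum_mul_exp_le_exp hξ fun i => (le_abs_self _).trans (abs_mul_apply_le l x i)

lemma gibbsW_nonneg (hξ : ξ ∈ stdSimplex ℝ (Fin n)) (l : ℝ) (x : Fin n → ℝ) (i : Fin n) :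
    0 ≤ gibbsW ξ l x i :=
  div_nonneg (mul_nonneg (hξ.1 i) (exp_pos _).le) (sum_mul_exp_pos hξ l x).le

lemma sum_gibbsW (hξ : ξ ∈ stdSimplex ℝ (Fin n)) (l : ℝ) (x : Fin n → ℝ) :
    ∑ i, gibbsW ξ l x i = 1 := by
  simp only [gibbsW]
  rw [← Finset.sum_div, div_self (sum_mul_exp_pos hξ l x).ne']

lemma gibbsW_le_one (hξ : ξ ∈ stdSimplex ℝ (Fin n)) (l : ℝ) (x : Fin n → ℝ) (i : Fin n) :
    gibbsW ξ l x i ≤ 1 :=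
  sum_gibbsW hξ l x ▸
    Finset.single_le_sum (fun j _ => gibbsW_nonneg hξ l x j) (Finset.mem_univ i)

lemma abs_gibbsW_le_one (hξ : ξ ∈ stdSimplex ℝ (Fin n)) (l : ℝ) (x : Fin n → ℝ) (i : Fin n) :
    |gibbsW ξ l x i| ≤ 1 :=
  (abs_of_nonneg (gibbsW_nonneg hξ l x i)).trans_le (gibbsW_le_one hξ l x i)

lemma abs_sum_gibbsW_mul_le (hξ : ξ ∈ stdSimplex ℝ (Fin n)) (l : ℝ) (x v : Fin n → ℝ) :
    |∑ i, gibbsW ξ l x i * v i| ≤ ‖v‖ :=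
  calc |∑ i, gibbsW ξ l x i * v i| ≤ ∑ i, gibbsW ξ l x i * ‖v‖ := by
        refine (Finset.abs_sum_le_sum_abs _ _).trans (Finset.sum_le_sum fun i _ => ?_)
        rw [abs_mul, abs_of_nonneg (gibbsW_nonneg hξ l x i)]
        exact mul_le_mul_of_nonneg_left (norm_le_pi_norm v i) (gibbsW_nonneg hξ l x i)
    _ = ‖v‖ := by rw [← Finset.sum_mul, sum_gibbsW hξ, one_mul]

lemma continuous_gibbsW (hξ : ξ ∈ stdSimplex ℝ (Fin n)) (l : ℝ) (i : Fin n) :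
    Continuous fun x => gibbsW ξ l x i :=
  Continuous.div (by fun_prop) (by fun_prop) fun x => (sum_mul_exp_pos hξ l x).ne'

lemma hasDerivAt_log_sum_mul_exp (hξ : ξ ∈ stdSimplex ℝ (Fin n)) (l : ℝ) (x : Fin n → ℝ) :
    HasDerivAt (fun l => log (∑ i, ξ i * exp (l * x i))) (∑ i, gibbsW ξ l x i * x i) l := by
  have hZ : HasDerivAt (fun l => ∑ i, ξ i * exp (l * x i)) (∑ i, ξ i * exp (l * x i) * x i) l :=
    HasDerivAt.fun_sum fun i _ => by
      simpa [mul_assoc] using ((hasDerivAt_mul_const (x i)).exp).const_mul (ξ i)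
  convert hZ.log (sum_mul_exp_pos hξ l x).ne' using 1
  simp only [gibbsW, Finset.sum_div]
  exact Finset.sum_congr rfl fun i _ => by ring

theorem hasDerivAt_integral_log_sum_mul_exp (hξ : ξ ∈ stdSimplex ℝ (Fin n))
    {μ : Measure (Fin n → ℝ)} (hμ : Integrable id μ) (lam : ℝ) :
    HasDerivAt (fun l => ∫ x, log (∑ i, ξ i * exp (l * x i)) ∂μ)
      (∫ x, ∑ i, gibbsW ξ lam x i * x i ∂μ) lam := by
  have hF_meas (l : ℝ) : Measurable fun x : Fin n → ℝ => log (∑ i, ξ i * exp (l * x i)) := by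
    fun_prop
  have hF'_meas : Measurable fun x => ∑ i, gibbsW ξ lam x i * x i := by
    unfold gibbsW; fun_prop
  refine (hasDerivAt_integral_of_dominated_loc_of_deriv_le (bound := fun x => ‖x‖)
    Filter.univ_mem (.of_forall fun l => (hF_meas l).aestronglyMeasurable) ?_
    hF'_meas.aestronglyMeasurable (ae_of_all _ fun x l _ => abs_sum_gibbsW_mul_le hξ l x x)
    hμ.norm (ae_of_all _ fun x l _ => hasDerivAt_log_sum_mul_exp hξ l x)).2
  exact (hμ.norm.const_mul |lam|).mono' (hF_meas lam).aestronglyMeasurable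
    (ae_of_all _ fun x => abs_log_sum_mul_exp_le hξ lam x)

noncomputable def gibbsWDeriv (ξ : Fin n → ℝ) (l : ℝ) (x : Fin n → ℝ) (i : Fin n) :
    (Fin n → ℝ) →L[ℝ] ℝ :=
  (l * gibbsW ξ l x i) •
    (ContinuousLinearMap.proj (R := ℝ) (φ := fun _ : Fin n => ℝ) i -
      ∑ j, gibbsW ξ l x j • ContinuousLinearMap.proj j)

@[simp]
lemma gibbsWDeriv_apply (l : ℝ) (x : Fin n → ℝ) (i : Fin n) (v : Fin n → ℝ) :
    gibbsWDeriv ξ l x i v = l * gibbsW ξ l x i * (v i - ∑ j, gibbsW ξ l x j * v j) := by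
  simp [gibbsWDeriv]

lemma hasFDerivAt_gibbsW (hξ : ξ ∈ stdSimplex ℝ (Fin n)) (l : ℝ) (x : Fin n → ℝ) (i : Fin n) :
    HasFDerivAt (fun x => gibbsW ξ l x i) (gibbsWDeriv ξ l x i) x := by
  have hexp (j : Fin n) : HasFDerivAt (fun x : Fin n → ℝ => ξ j * exp (l * x j))
      ((ξ j * exp (l * x j) * l) • (ContinuousLinearMap.proj j : (Fin n → ℝ) →L[ℝ] ℝ)) x := by
    refine ((((hasFDerivAt_apply j x).const_mul l).exp).const_mul (ξ j)).congr_fderiv ?_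
    ext v
    simp only [smul_apply, ContinuousLinearMap.proj_apply, smul_eq_mul]
    ring
  have hZ := (sum_mul_exp_pos hξ l x).ne'
  have hinv := (hasDerivAt_inv hZ).comp_hasFDerivAt x
    (HasFDerivAt.fun_sum fun j _ => hexp j)
  have hfun : (fun x => gibbsW ξ l x i) =
      (fun x => ξ i * exp (l * x i)) * ((fun y => y⁻¹) ∘ fun x => ∑ j, ξ j * exp (l * x j)) := by
    ext y; simp [gibbsW, div_eq_mul_inv]
  rw [hfun]
  refine ((hexp i).mul hinv).congr_fderiv ?_
  ext v
  simp only [gibbsWDeriv_apply, gibbsW, add_apply, smul_apply, sum_apply,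
    ContinuousLinearMap.proj_apply, smul_eq_mul, Function.comp_apply, div_mul_eq_mul_div,
    ← Finset.sum_div]
  field_simp
  simp only [mul_assoc, ← Finset.mul_sum]
  ring

lemma continuous_gibbsWDeriv (hξ : ξ ∈ stdSimplex ℝ (Fin n)) (l : ℝ) (i : Fin n) :
    Continuous fun x => gibbsWDeriv ξ l x i := by
  have := continuous_gibbsW hξ l
  unfold gibbsWDeriv
  fun_prop

lemma norm_gibbsWDeriv_le (hξ : ξ ∈ stdSimplex ℝ (Fin n)) (l : ℝ) (x : Fin n → ℝ) (i : Fin n) :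
    ‖gibbsWDeriv ξ l x i‖ ≤ 2 * |l| := by
  refine ContinuousLinearMap.opNorm_le_bound _ (by positivity) fun v => ?_
  rw [gibbsWDeriv_apply, Real.norm_eq_abs, abs_mul, abs_mul, abs_of_nonneg (gibbsW_nonneg hξ l x i)]
  calc |l| * gibbsW ξ l x i * |v i - ∑ j, gibbsW ξ l x j * v j| ≤ |l| * 1 * (‖v‖ + ‖v‖) := by
        gcongr
        · exact gibbsW_le_one hξ l x i
        · exact (abs_sub _ _).trans (add_le_add ((Real.norm_eq_abs _).symm.trans_le
            (norm_le_pi_norm v i)) (abs_sum_gibbsW_mul_le hξ l x v))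
    _ = 2 * |l| * ‖v‖ := by ring

lemma sum_gibbsWDeriv_apply_col (hξ : ξ ∈ stdSimplex ℝ (Fin n)) {C : Matrix (Fin n) (Fin n) ℝ}
    (hCdiag : ∀ i, C i i = 1) (l : ℝ) (x : Fin n → ℝ) :
    ∑ i, gibbsWDeriv ξ l x i (fun j => C j i) =
      l * (1 - ∑ i, ∑ j, gibbsW ξ l x i * gibbsW ξ l x j * C i j) := by
  have hswap : ∑ i, gibbsW ξ l x i * ∑ j, gibbsW ξ l x j * C j i =
      ∑ i, ∑ j, gibbsW ξ l x i * gibbsW ξ l x j * C i j := by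
    simp_rw [Finset.mul_sum]
    rw [Finset.sum_comm]
    exact Finset.sum_congr rfl fun i _ => Finset.sum_congr rfl fun j _ => by ring
  calc ∑ i, gibbsWDeriv ξ l x i (fun j => C j i)
      = ∑ i, (l * gibbsW ξ l x i - l * (gibbsW ξ l x i * ∑ j, gibbsW ξ l x j * C j i)) :=
        Finset.sum_congr rfl fun i _ => by rw [gibbsWDeriv_apply, hCdiag]; ring
    _ = l * (1 - ∑ i, ∑ j, gibbsW ξ l x i * gibbsW ξ l x j * C i j) := by
        rw [Finset.sum_sub_distrib, ← Finset.mul_sum, ← Finset.mul_sum, sum_gibbsW hξ, hswap,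
          mul_sub, mul_one]

variable {μ : Measure (Fin n → ℝ)}

lemma integrable_eval_mul_gibbsW (hξ : ξ ∈ stdSimplex ℝ (Fin n)) (hμ : Integrable id μ) (l : ℝ)
    (i : Fin n) : Integrable (fun x => x i * gibbsW ξ l x i) μ :=
  (hμ.eval i).mul_bdd (continuous_gibbsW hξ l i).aestronglyMeasurable
    (ae_of_all _ (abs_gibbsW_le_one hξ l · i))

lemma integrable_sum_sum_gibbsW_mul [IsFiniteMeasure μ] (hξ : ξ ∈ stdSimplex ℝ (Fin n)) (l : ℝ)
    (C : Matrix (Fin n) (Fin n) ℝ) :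
    Integrable (fun x => ∑ i, ∑ j, gibbsW ξ l x i * gibbsW ξ l x j * C i j) μ :=
  integrable_finsetSum _ fun i _ => integrable_finsetSum _ fun j _ =>
    .of_bound (((continuous_gibbsW hξ l i).mul (continuous_gibbsW hξ l j)).mul
      continuous_const).aestronglyMeasurable |C i j| (ae_of_all _ fun x => by
        rw [Real.norm_eq_abs, abs_mul, abs_mul]
        exact mul_le_of_le_one_left (abs_nonneg _)
          (mul_le_one₀ (abs_gibbsW_le_one hξ l x i) (abs_nonneg _) (abs_gibbsW_le_one hξ l x j)))

end Gibbs

lemma Matrix.PosSemidef.cfc_sqrt_mul_transpose {n : ℕ} {C : Matrix (Fin n) (Fin n) ℝ}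
    (hC : C.PosSemidef) : cfc Real.sqrt C * (cfc Real.sqrt C).transpose = C := by
  have hsa : IsSelfAdjoint (cfc Real.sqrt C) := cfc_predicate _ _
  rw [← Matrix.conjTranspose_eq_transpose_of_trivial, ← Matrix.star_eq_conjTranspose, hsa.star_eq,
    ← cfc_mul _ _ C]
  conv_rhs => rw [← cfc_id' ℝ C hC.1.isSelfAdjoint]
  refine cfc_congr fun x hx => ?_
  rw [hC.1.spectrum_real_eq_range_eigenvalues] at hx
  obtain ⟨i, rfl⟩ := hx
  exact Real.mul_self_sqrt (hC.eigenvalues_nonneg i)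

lemma gaussianPi_eq_map_cfc_sqrt {n : ℕ} {C : Matrix (Fin n) (Fin n) ℝ} (hC : C.PosSemidef) :
    gaussianPi C =
      Measure.map (fun z => (cfc Real.sqrt C).mulVec z) γ := by
  rw [gaussianPi, dif_pos hC, hC.1.cfc_eq]
  rfl

lemma isProbabilityMeasure_gaussianPi {n : ℕ} {C : Matrix (Fin n) (Fin n) ℝ} (hC : C.PosSemidef) :
    IsProbabilityMeasure (gaussianPi C) := by
  rw [gaussianPi_eq_map_cfc_sqrt hC]
  exact Measure.isProbabilityMeasure_map (by fun_prop)

lemma integrable_id_gaussianPi {n : ℕ} {C : Matrix (Fin n) (Fin n) ℝ} (hC : C.PosSemidef) :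
    Integrable id (gaussianPi C) := by
  rw [gaussianPi_eq_map_cfc_sqrt hC, integrable_map_measure aestronglyMeasurable_id (by fun_prop)]
  exact (Matrix.toLin' (cfc Real.sqrt C)).toContinuousLinearMap.integrable_comp
    (Integrable.of_eval integrable_eval_pi_gaussianReal)

theorem integral_eval_mul_gaussianPi {n : ℕ} {C : Matrix (Fin n) (Fin n) ℝ} (hC : C.PosSemidef)
    {f : (Fin n → ℝ) → ℝ} {f' : (Fin n → ℝ) → (Fin n → ℝ) →L[ℝ] ℝ} {M M' : ℝ}
    (hf : ∀ x, HasFDerivAt f (f' x) x) (hf' : Continuous f')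
    (hfM : ∀ x, |f x| ≤ M) (hf'M : ∀ x, ‖f' x‖ ≤ M') (i : Fin n) :
    ∫ x, x i * f x ∂gaussianPi C = ∫ x, f' x (fun j => C j i) ∂gaussianPi C := by
  rw [gaussianPi_eq_map_cfc_sqrt hC, integral_eval_mul_map_mulVec_pi_gaussianReal _ hf hf' hfM hf'M,
    hC.cfc_sqrt_mul_transpose]

/-- **Derivative of the free-energy functional** (from the proof of Lemma 2.7).
For `ξ ∈ Δ_n` and `C ∈ 𝒞_n`, the function
`P(λ) = ∫ log(∑_i ξ_i e^{λ x_i}) dN(0,C)(x)` is differentiable with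
`P'(λ) = λ (1 − ∫ ∑_{i,j} w_i(λ,x) w_j(λ,x) c_{ij} dN(0,C)(x))`. -/
theorem freeEnergy_hasDerivAt
    {n : ℕ} (ξ : Fin n → ℝ) (hξnonneg : ∀ i, 0 ≤ ξ i) (hξsum : ∑ i, ξ i = 1)
    (C : Matrix (Fin n) (Fin n) ℝ) (hC : C.PosSemidef) (hCdiag : ∀ i, C i i = 1)
    (lam : ℝ) :
    HasDerivAt
      (fun l : ℝ => ∫ x, Real.log (∑ i, ξ i * Real.exp (l * x i)) ∂(gaussianPi C))
      (lam * (1 - ∫ x, ∑ i, ∑ j, gibbsW ξ lam x i * gibbsW ξ lam x j * C i j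
        ∂(gaussianPi C)))
      lam := by
  have hξ : ξ ∈ stdSimplex ℝ (Fin n) := ⟨hξnonneg, hξsum⟩
  have := isProbabilityMeasure_gaussianPi hC
  have hμ := integrable_id_gaussianPi hC
  refine (hasDerivAt_integral_log_sum_mul_exp hξ hμ lam).congr_deriv ?_
  calc ∫ x, ∑ i, gibbsW ξ lam x i * x i ∂gaussianPi C
      = ∑ i, ∫ x, x i * gibbsW ξ lam x i ∂gaussianPi C := by
        simp_rw [mul_comm (gibbsW ξ lam _ _)]
        exact integral_finsetSum _ fun i _ => integrable_eval_mul_gibbsW hξ hμ lam i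
    _ = ∑ i, ∫ x, gibbsWDeriv ξ lam x i (fun j => C j i) ∂gaussianPi C :=
        Finset.sum_congr rfl fun i _ => integral_eval_mul_gaussianPi hC
          (hasFDerivAt_gibbsW hξ lam · i) (continuous_gibbsWDeriv hξ lam i)
          (abs_gibbsW_le_one hξ lam · i) (norm_gibbsWDeriv_le hξ lam · i) i
    _ = ∫ x, lam * (1 - ∑ i, ∑ j, gibbsW ξ lam x i * gibbsW ξ lam x j * C i j) ∂gaussianPi C := by
        rw [← integral_finsetSum _ fun i _ => integrable_clm_apply_of_norm_le
          (continuous_gibbsWDeriv hξ lam i) (norm_gibbsWDeriv_le hξ lam · i) _]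
        simp_rw [sum_gibbsWDeriv_apply_col hξ hCdiag]
    _ = lam * (1 - ∫ x, ∑ i, ∑ j, gibbsW ξ lam x i * gibbsW ξ lam x j * C i j ∂gaussianPi C) := by
        rw [integral_const_mul, integral_sub (integrable_const 1)
          (integrable_sum_sum_gibbsW_mul hξ lam C), integral_const, probReal_univ, one_smul]
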